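/- arXiv:1702.08264 — 2 statements merged into one kernel-verified Lean document; each statement's English description precedes it below -/
import Mathlib

section
/- Let Ψ be a finite reduced root system in a finite-dimensional real inner product space, let ψ₁′, ψ₂′ ∈ Ψ be linearly independent, and suppose that {ψ₁′, ψ₂′} is a base of the root subsystem Ψ′ := Ψ ∩ (ℝψ₁′ + ℝψ₂′). Then there exists a base Σ′ of Ψ with {ψ₁′, ψ₂′} ⊆ Σ′. -/
open RealInnerProductSpace

variable {V : Type*} [NormedAddCommGroup V] [InnerProductSpace ℝ V]

/-- The pairing `⟨x | v∨⟩ = 2(x,v)/(v,v)` of a vector against the "coroot" of `v`. -/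
noncomputable def pairR (x v : V) : ℝ := 2 * ⟪x, v⟫ / ⟪v, v⟫

/-- The reflection `s_v(x) = x - ⟨x|v∨⟩ v` in the nonzero vector `v`. -/
noncomputable def reflV (v x : V) : V := x - pairR x v • v

/-- A finite reduced crystallographic root system in a real inner product space:
a finite set of nonzero vectors, closed under all of its reflections, with integral
Cartan numbers, such that the only multiples of a root `α` that are roots are `±α`. -/
def IsRootSystem (Φ : Set V) : Prop :=
  Φ.Finite ∧
  (0 : V) ∉ Φ ∧
  (∀ α ∈ Φ, ∀ β ∈ Φ, reflV α β ∈ Φ) ∧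
  (∀ α ∈ Φ, ∀ β ∈ Φ, ∃ n : ℤ, pairR β α = (n : ℝ)) ∧
  (∀ α ∈ Φ, ∀ c : ℝ, c • α ∈ Φ → c • α = α ∨ c • α = -α)

/-- `S` is a base of `Φ`: a linearly independent subset spanning the span of `Φ`
such that every element of `Φ` is an integral linear combination of `S` with
coefficients all of the same sign. -/
def IsBase (Φ S : Set V) : Prop :=
  S ⊆ Φ ∧
  LinearIndependent ℝ ((↑) : S → V) ∧
  Submodule.span ℝ S = Submodule.span ℝ Φ ∧
  ∀ α ∈ Φ, ∃ c : V →₀ ℤ,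
    (↑c.support : Set V) ⊆ S ∧
    α = c.sum (fun v n => (n : ℝ) • v) ∧
    ((∀ v, 0 ≤ c v) ∨ (∀ v, c v ≤ 0))

/-- The positive elements with respect to a base `S`: nonnegative integral
combinations of `S`. -/
def IsPositive (S : Set V) (α : V) : Prop :=
  ∃ c : V →₀ ℤ,
    (↑c.support : Set V) ⊆ S ∧
    α = c.sum (fun v n => (n : ℝ) • v) ∧
    (∀ v, 0 ≤ c v)

/-- `Ψ` is a root subsystem of `Φ`: a nonempty subset stable under its own reflections. -/
def IsRootSubsystem (Φ Ψ : Set V) : Prop :=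
  Ψ ⊆ Φ ∧ Ψ.Nonempty ∧ ∀ ψ ∈ Ψ, ∀ x ∈ Ψ, reflV ψ x ∈ Ψ

/-- `Ψ` is additively closed in `Φ` : `Ψ = Φ ∩ ℤΨ`. -/
def IsAddClosedIn (Φ Ψ : Set V) : Prop :=
  Ψ = Φ ∩ (Submodule.span ℤ Ψ : Set V)


/-!
Pick `t₁` with `⟪t₁, ψ₁⟫ = ⟪t₁, ψ₂⟫ = 1` and `t₀ ⟂ span {ψ₁, ψ₂}` orthogonal to no root outside
that plane, and put `t = N • t₀ + t₁`. For `N` large every root `α` has `|⟪t, α⟫| ≥ 1`: inside the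
plane because `α` is a nonzero integral combination of `ψ₁, ψ₂` with coefficients of one sign,
outside it because the term `N ⟪t₀, α⟫` dominates. So `t` is regular, and `ψ₁, ψ₂` have the least
height `1` among the roots positive for `t`, hence are indecomposable. The indecomposable positive
roots for a regular `t` form a base (Humphreys, §10.1).
-/

lemma pairR_self {v : V} (hv : v ≠ 0) : pairR v v = 2 := by
  rw [pairR, mul_div_assoc, div_self (inner_self_ne_zero.2 hv), mul_one]

lemma reflV_self {v : V} (hv : v ≠ 0) : reflV v v = -v := by
  rw [reflV, pairR_self hv, two_smul]
  abel

lemma reflV_of_pairR_eq_one {v x : V} (h : pairR x v = 1) : reflV v x = x - v := by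
  rw [reflV, h, one_smul]

lemma pairR_mul_pairR (x y : V) :
    pairR x y * pairR y x = 4 * ⟪x, y⟫ ^ 2 / (⟪y, y⟫ * ⟪x, x⟫) := by
  rw [pairR, pairR, div_mul_div_comm, real_inner_comm y x]
  ring

namespace IsRootSystem

variable {Φ : Set V} {α β : V}

lemma ne_zero (hΦ : IsRootSystem Φ) (hα : α ∈ Φ) : α ≠ 0 :=
  fun h => hΦ.2.1 (h ▸ hα)

lemma neg_mem (hΦ : IsRootSystem Φ) (hα : α ∈ Φ) : -α ∈ Φ :=
  reflV_self (hΦ.ne_zero hα) ▸ hΦ.2.2.1 α hα α hα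

lemma inner_lt_norm_mul_norm (hΦ : IsRootSystem Φ) (hα : α ∈ Φ) (hβ : β ∈ Φ) (hne : α ≠ β)
    (hpos : 0 < ⟪α, β⟫) : ⟪α, β⟫ < ‖α‖ * ‖β‖ := by
  refine (real_inner_le_norm α β).lt_of_ne fun heq => ?_
  have hα0 := hΦ.ne_zero hα
  have hβ0 := hΦ.ne_zero hβ
  obtain ⟨-, r, -, rfl⟩ := (real_inner_div_norm_mul_norm_eq_one_iff α β).1 <| by
    rw [heq, div_self (by positivity)]
  rcases hΦ.2.2.2.2 α hα r hβ with h | h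
  · exact hne h.symm
  · rw [h, inner_neg_right, neg_pos] at hpos
    exact hpos.not_ge real_inner_self_nonneg

/-- The Cartan numbers `⟨α|β∨⟩`, `⟨β|α∨⟩` are positive integers with product `< 4`
(strict Cauchy–Schwarz), so one of them is `1`. -/
lemma sub_mem_of_inner_pos (hΦ : IsRootSystem Φ) (hα : α ∈ Φ) (hβ : β ∈ Φ) (hne : α ≠ β)
    (hpos : 0 < ⟪α, β⟫) : α - β ∈ Φ := by
  obtain ⟨m, hm⟩ := hΦ.2.2.2.1 β hβ α hα
  obtain ⟨n, hn⟩ := hΦ.2.2.2.1 α hα β hβ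
  have hαα : 0 < ⟪α, α⟫ := real_inner_self_pos.2 (hΦ.ne_zero hα)
  have hββ : 0 < ⟪β, β⟫ := real_inner_self_pos.2 (hΦ.ne_zero hβ)
  have hm_pos : (0 : ℝ) < m := hm ▸ by unfold pairR; positivity
  have hn_pos : (0 : ℝ) < n := hn ▸ by unfold pairR; rw [real_inner_comm]; positivity
  have hmn : (m : ℝ) * n < 4 := by
    rw [← hm, ← hn, pairR_mul_pairR, div_lt_iff₀ (by positivity),
      real_inner_self_eq_norm_mul_norm, real_inner_self_eq_norm_mul_norm]
    have := hΦ.inner_lt_norm_mul_norm hα hβ hne hpos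
    nlinarith
  have hm1 : 1 ≤ m := by exact_mod_cast hm_pos
  have hn1 : 1 ≤ n := by exact_mod_cast hn_pos
  have hmn' : m * n < 4 := by exact_mod_cast hmn
  obtain rfl | rfl : m = 1 ∨ n = 1 := by
    by_contra! h
    nlinarith [lt_of_le_of_ne hm1 (Ne.symm h.1), lt_of_le_of_ne hn1 (Ne.symm h.2)]
  · simpa [reflV_of_pairR_eq_one (by exact_mod_cast hm)] using hΦ.2.2.1 β hβ α hα
  · simpa [reflV_of_pairR_eq_one (by exact_mod_cast hn)] using hΦ.neg_mem (hΦ.2.2.1 α hα β hβ)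

end IsRootSystem

section Positive

variable {S : Set V} {α β : V}

lemma isPositive_of_mem (hα : α ∈ S) : IsPositive S α := by
  classical
  exact ⟨Finsupp.single α 1, by simpa using hα, by simp, Finsupp.single_nonneg.2 zero_le_one⟩

lemma IsPositive.add (hα : IsPositive S α) (hβ : IsPositive S β) : IsPositive S (α + β) := by
  classical
  obtain ⟨c, hcS, rfl, hc⟩ := hα
  obtain ⟨d, hdS, rfl, hd⟩ := hβ
  refine ⟨c + d, ?_, ?_, fun v => add_nonneg (hc v) (hd v)⟩
  · exact (Finset.coe_subset.2 Finsupp.support_add).trans (by simpa using ⟨hcS, hdS⟩)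
  · rw [Finsupp.sum_add_index' (by simp) (fun _ _ _ => by push_cast; rw [add_smul])]

lemma IsPositive.mem_span (h : IsPositive S α) : α ∈ Submodule.span ℝ S := by
  obtain ⟨c, hcS, rfl, -⟩ := h
  exact Submodule.sum_mem _ fun v hv => Submodule.smul_mem _ _ (Submodule.subset_span (hcS hv))

lemma isBase_of_forall_isPositive {Φ : Set V} (hSΦ : S ⊆ Φ)
    (hS : LinearIndependent ℝ ((↑) : S → V))
    (hpos : ∀ α ∈ Φ, IsPositive S α ∨ IsPositive S (-α)) : IsBase Φ S := by
  refine ⟨hSΦ, hS, le_antisymm (Submodule.span_mono hSΦ) (Submodule.span_le.2 fun α hα => ?_),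
    fun α hα => ?_⟩
  · rcases hpos α hα with h | h
    exacts [h.mem_span, neg_neg α ▸ Submodule.neg_mem _ h.mem_span]
  · rcases hpos α hα with ⟨c, hcS, rfl, hc⟩ | ⟨c, hcS, hc_eq, hc⟩
    · exact ⟨c, hcS, rfl, Or.inl hc⟩
    · refine ⟨-c, by simpa using hcS, ?_, Or.inr fun v => by simpa using hc v⟩
      rw [← neg_neg α, hc_eq, Finsupp.sum_neg_index (by simp)]
      simp [Finsupp.sum, neg_smul]

end Positive

def positiveRoots (Φ : Set V) (t : V) : Set V := {α ∈ Φ | 0 < ⟪t, α⟫}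

def indecomposableRoots (Φ : Set V) (t : V) : Set V :=
  {α ∈ positiveRoots Φ t | ∀ β ∈ positiveRoots Φ t, ∀ γ ∈ positiveRoots Φ t, β + γ ≠ α}

section Indecomposable

variable {Φ : Set V} {t α β : V}

lemma mem_indecomposableRoots_of_forall_le (hα : α ∈ positiveRoots Φ t)
    (hmin : ∀ β ∈ positiveRoots Φ t, ⟪t, α⟫ ≤ ⟪t, β⟫) : α ∈ indecomposableRoots Φ t := by
  refine ⟨hα, fun β hβ γ hγ hsum => ?_⟩
  have hsplit : ⟪t, α⟫ = ⟪t, β⟫ + ⟪t, γ⟫ := by rw [← hsum, inner_add_right]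
  linarith [hmin β hβ, hγ.2]

lemma isPositive_of_mem_positiveRoots (hΦ : Φ.Finite) (hα : α ∈ positiveRoots Φ t) :
    IsPositive (indecomposableRoots Φ t) α := by
  have hfin : ∀ a : ℝ, {β ∈ positiveRoots Φ t | ⟪t, β⟫ < a}.Finite :=
    fun a => hΦ.subset fun β hβ => hβ.1.1
  induction hn : {β ∈ positiveRoots Φ t | ⟪t, β⟫ < ⟪t, α⟫}.ncard using Nat.strong_induction_on
    generalizing α with
  | _ n ih =>
    by_cases hind : α ∈ indecomposableRoots Φ t
    · exact isPositive_of_mem hind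
    obtain ⟨β, hβ, γ, hγ, rfl⟩ : ∃ β ∈ positiveRoots Φ t, ∃ γ ∈ positiveRoots Φ t, β + γ = α := by
      simpa [indecomposableRoots, hα] using hind
    have hsplit : ⟪t, β + γ⟫ = ⟪t, β⟫ + ⟪t, γ⟫ := inner_add_right _ _ _
    have hlower : ∀ δ ∈ positiveRoots Φ t, ⟪t, δ⟫ < ⟪t, β + γ⟫ →
        {x ∈ positiveRoots Φ t | ⟪t, x⟫ < ⟪t, δ⟫}.ncard < n := fun δ hδ hδlt =>
      hn ▸ Set.ncard_lt_ncard ⟨fun x hx => ⟨hx.1, hx.2.trans hδlt⟩,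
        fun h => (h ⟨hδ, hδlt⟩).2.false⟩ (hfin _)
    exact (ih _ (hlower β hβ (by linarith [hγ.2])) hβ rfl).add
      (ih _ (hlower γ hγ (by linarith [hβ.2])) hγ rfl)

lemma inner_nonpos_of_mem_indecomposableRoots (hΦ : IsRootSystem Φ) (ht : ∀ α ∈ Φ, ⟪t, α⟫ ≠ 0)
    (hα : α ∈ indecomposableRoots Φ t) (hβ : β ∈ indecomposableRoots Φ t) (hne : α ≠ β) :
    ⟪α, β⟫ ≤ 0 := by
  by_contra! hpos
  have hsub := hΦ.sub_mem_of_inner_pos hα.1.1 hβ.1.1 hne hpos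
  rcases (ht _ hsub).lt_or_gt with hneg | hgt
  · refine hβ.2 (β - α) ⟨by simpa using hΦ.neg_mem hsub, ?_⟩ α hα.1 (sub_add_cancel β α)
    rw [inner_sub_right] at hneg ⊢
    linarith
  · exact hα.2 (α - β) ⟨hsub, hgt⟩ β hβ.1 (sub_add_cancel α β)

lemma linearIndependent_indecomposableRoots (hΦ : IsRootSystem Φ)
    (ht : ∀ α ∈ Φ, ⟪t, α⟫ ≠ 0) :
    LinearIndependent ℝ ((↑) : indecomposableRoots Φ t → V) :=
  LinearMap.BilinForm.linearIndependent_of_pairwise_le_zero (innerₗ V)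
    (fun x hx => by simpa using real_inner_self_pos.2 hx) (innerₗ V t) _
    (fun α => α.2.1.2)
    (fun α β hne => inner_nonpos_of_mem_indecomposableRoots hΦ ht α.2 β.2
      (Subtype.coe_ne_coe.2 hne))

lemma isBase_indecomposableRoots (hΦ : IsRootSystem Φ) (ht : ∀ α ∈ Φ, ⟪t, α⟫ ≠ 0) :
    IsBase Φ (indecomposableRoots Φ t) := by
  refine isBase_of_forall_isPositive (fun α hα => hα.1.1)
    (linearIndependent_indecomposableRoots hΦ ht) fun α hα => ?_
  rcases (ht α hα).lt_or_gt with hneg | hpos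
  · exact Or.inr <| isPositive_of_mem_positiveRoots hΦ.1
      ⟨hΦ.neg_mem hα, by rwa [inner_neg_right, neg_pos]⟩
  · exact Or.inl <| isPositive_of_mem_positiveRoots hΦ.1 ⟨hα, hpos⟩

end Indecomposable

lemma exists_inner_eq_of_linearIndependent {ι : Type*} [Finite ι] {v : ι → V}
    (hv : LinearIndependent ℝ v) (c : ι → ℝ) : ∃ t : V, ∀ i, ⟪t, v i⟫ = c i := by
  let W := Submodule.span ℝ (Set.range v)
  have : FiniteDimensional ℝ W := FiniteDimensional.span_of_finite ℝ (Set.finite_range v)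
  let b := Module.Basis.span hv
  let f : W →L[ℝ] ℝ := LinearMap.toContinuousLinearMap (b.constr ℝ c)
  refine ⟨((InnerProductSpace.toDual ℝ W).symm f : V), fun i => ?_⟩
  have hbi : (b i : V) = v i := by simp [b, Module.Basis.span_apply]
  rw [← hbi, ← Submodule.coe_inner, InnerProductSpace.toDual_symm_apply]
  simp [f, Module.Basis.constr_basis]

lemma exists_mem_orthogonal_forall_inner_ne_zero (W : Submodule ℝ V) [W.HasOrthogonalProjection]
    {F : Set V} (hF : F.Finite) (hFW : ∀ x ∈ F, x ∉ W) :
    ∃ t ∈ Wᗮ, ∀ x ∈ F, ⟪t, x⟫ ≠ 0 := by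
  let H : F → Submodule ℝ Wᗮ := fun x => LinearMap.ker ((innerₗ V x).comp Wᗮ.subtype)
  have hH : ∀ x, H x ≠ ⊤ := fun x hx => by
    refine hFW x x.2 (W.orthogonal_orthogonal ▸ (Submodule.mem_orthogonal' _ _).2 fun u hu => ?_)
    simpa [H] using LinearMap.congr_fun (LinearMap.ker_eq_top.1 hx) ⟨u, hu⟩
  have : Finite F := hF.to_subtype
  obtain ⟨t, ht⟩ : ∃ t : Wᗮ, t ∉ ⋃ x, (H x : Set Wᗮ) := by
    by_contra! h
    obtain ⟨x, hx⟩ := Subspace.exists_eq_top_of_iUnion_eq_univ (Set.eq_univ_of_forall h)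
    exact hH x hx
  refine ⟨t, t.2, fun x hx h0 => ht (Set.mem_iUnion.2 ⟨⟨x, hx⟩, ?_⟩)⟩
  simpa [H, real_inner_comm] using h0

lemma exists_forall_one_le_abs_mul_add {ι : Type*} {F : Set ι} (hF : F.Finite) (f g : ι → ℝ)
    (hf : ∀ x ∈ F, f x ≠ 0) : ∃ N : ℝ, ∀ x ∈ F, 1 ≤ |N * f x + g x| := by
  have h : ∀ x ∈ F, ∀ᶠ N in Filter.atTop, 1 ≤ |N * f x + g x| := fun x hx => by
    have hfx := abs_pos.2 (hf x hx)
    filter_upwards [Filter.eventually_ge_atTop ((1 + |g x|) / |f x|)] with N hN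
    have hN0 : 0 ≤ N := le_trans (by positivity) hN
    rw [div_le_iff₀ hfx] at hN
    calc 1 ≤ |N * f x| - |g x| := by rw [abs_mul, abs_of_nonneg hN0]; linarith
      _ ≤ |N * f x + g x| := by simpa using abs_sub_abs_le_abs_sub (N * f x) (-g x)
  exact ((Filter.eventually_all_finite hF).2 h).exists

lemma one_le_abs_inner_of_isBase {Φ S : Set V} (h0 : (0 : V) ∉ Φ) (hS : IsBase Φ S) {t : V}
    (ht : ∀ s ∈ S, ⟪t, s⟫ = 1) {α : V} (hα : α ∈ Φ) : 1 ≤ |⟪t, α⟫| := by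
  obtain ⟨c, hcS, rfl, hsign⟩ := hS.2.2.2 α hα
  have hval : ⟪t, c.sum fun v n => (n : ℝ) • v⟫ = ((c.sum fun _ n => n : ℤ) : ℝ) := by
    rw [Finsupp.sum, inner_sum, Finsupp.sum, Int.cast_sum]
    exact Finset.sum_congr rfl fun v hv => by rw [real_inner_smul_right, ht v (hcS hv), mul_one]
  have hne : (c.sum fun _ n => n) ≠ 0 := by
    intro hzero
    obtain ⟨v, hv⟩ : c.support.Nonempty := by
      rw [Finset.nonempty_iff_ne_empty, Ne, Finsupp.support_eq_empty]
      rintro rfl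
      exact h0 (by simpa using hα)
    refine Finsupp.mem_support_iff.1 hv ?_
    rcases hsign with h | h
    · exact (Finset.sum_eq_zero_iff_of_nonneg fun v _ => h v).1 hzero v hv
    · exact (Finset.sum_eq_zero_iff_of_nonpos fun v _ => h v).1 hzero v hv
  rw [hval]
  exact_mod_cast Int.one_le_abs hne

theorem stmt2_general {V : Type*} [NormedAddCommGroup V] [InnerProductSpace ℝ V]
    (Ψ : Set V) (hΨ : IsRootSystem Ψ) (ψ₁ ψ₂ : V)
    (hbase : IsBase (Ψ ∩ (Submodule.span ℝ ({ψ₁, ψ₂} : Set V) : Set V))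
      ({ψ₁, ψ₂} : Set V)) :
    ∃ Sg : Set V, IsBase Ψ Sg ∧ ψ₁ ∈ Sg ∧ ψ₂ ∈ Sg := by
  set S : Set V := {ψ₁, ψ₂}
  set W := Submodule.span ℝ S
  have : FiniteDimensional ℝ W := FiniteDimensional.span_of_finite ℝ (Set.toFinite S)
  obtain ⟨t₁, ht₁⟩ := exists_inner_eq_of_linearIndependent hbase.2.1 1
  obtain ⟨t₀, ht₀W, ht₀⟩ :=
    exists_mem_orthogonal_forall_inner_ne_zero W (hΨ.1.sdiff (t := W)) fun _ hα => hα.2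
  obtain ⟨N, hN⟩ := exists_forall_one_le_abs_mul_add (hΨ.1.sdiff (t := W)) _ _ ht₀
  set t := N • t₀ + t₁
  have ht : ∀ α, ⟪t, α⟫ = N * ⟪t₀, α⟫ + ⟪t₁, α⟫ := fun α => by
    rw [inner_add_left, real_inner_smul_left]
  have htS : ∀ s ∈ S, ⟪t, s⟫ = 1 := fun s hs => by
    rw [ht, (Submodule.mem_orthogonal' W t₀).1 ht₀W s (Submodule.subset_span hs), mul_zero,
      zero_add]
    exact ht₁ ⟨s, hs⟩
  have ht_ge : ∀ α ∈ Ψ, 1 ≤ |⟪t, α⟫| := fun α hα => by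
    by_cases hαW : α ∈ W
    · exact one_le_abs_inner_of_isBase (fun h => hΨ.2.1 h.1) hbase htS ⟨hα, hαW⟩
    · exact ht α ▸ hN α ⟨hα, hαW⟩
  have hS_indec : ∀ s ∈ S, s ∈ indecomposableRoots Ψ t := fun s hs =>
    mem_indecomposableRoots_of_forall_le ⟨(hbase.1 hs).1, by rw [htS s hs]; exact one_pos⟩
      fun β hβ => by simpa [htS s hs, abs_of_pos hβ.2] using ht_ge β hβ.1
  have hreg : ∀ α ∈ Ψ, ⟪t, α⟫ ≠ 0 := fun α hα =>
    abs_pos.1 (one_pos.trans_le (ht_ge α hα))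
  exact ⟨_, isBase_indecomposableRoots hΨ hreg, hS_indec ψ₁ (by simp [S]),
    hS_indec ψ₂ (by simp [S])⟩

/-- if `ψ₁, ψ₂` are linearly independent roots of `Ψ` such that `{ψ₁, ψ₂}`
is a base of the root subsystem `Ψ' = Ψ ∩ (ℝψ₁ + ℝψ₂)`, then `{ψ₁, ψ₂}` extends to a
base of `Ψ`. -/
theorem stmt2 {V : Type*} [NormedAddCommGroup V] [InnerProductSpace ℝ V]
    [FiniteDimensional ℝ V] (Ψ : Set V) (hΨ : IsRootSystem Ψ)
    (ψ₁ ψ₂ : V) (h₁ : ψ₁ ∈ Ψ) (h₂ : ψ₂ ∈ Ψ)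
    (hli : LinearIndependent ℝ ![ψ₁, ψ₂])
    (hbase : IsBase (Ψ ∩ (Submodule.span ℝ ({ψ₁, ψ₂} : Set V) : Set V))
      ({ψ₁, ψ₂} : Set V)) :
    ∃ Sg : Set V, IsBase Ψ Sg ∧ ψ₁ ∈ Sg ∧ ψ₂ ∈ Sg :=
  stmt2_general Ψ hΨ ψ₁ ψ₂ hbase
end

section
/- Let Φ be a finite reduced crystallographic root system with base S, let s be a folding of S, and let α ≠ β ∈ S be such that ⟨α|β∨⟩ ≠ ⟨sα|sβ∨⟩ or ⟨β|α∨⟩ ≠ ⟨sβ|sα∨⟩. Then the set S₀ = {α, β, sα, sβ} has exactly three elements; writing S₀ = {γ₁, γ₂, γ₃} with sγ₁ = γ₃, sγ₃ = γ₁ and sγ₂ = γ₂, after possibly exchanging γ₁ and γ₃ the Cartan integers on S₀ are those of type B₃, namely ⟨γ₁|γ₂∨⟩ = ⟨γ₃|γ₂∨⟩ = −1, ⟨γ₂|γ₁∨⟩ = −1, ⟨γ₂|γ₃∨⟩ = −2, and ⟨γ₁|γ₃∨⟩ = ⟨γ₃|γ₁∨⟩ = 0. -/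
open RealInnerProductSpace

variable {V : Type*} [NormedAddCommGroup V] [InnerProductSpace ℝ V]

/-- `s` is a folding of the base `S`: an involution of `S` such that
`⟨α|sα∨⟩ = 0` whenever `sα ≠ α`, and `⟨α - sα | β∨ + sβ∨⟩ = 0` for all `α, β ∈ S`. -/
def IsFolding (S : Set V) (s : V → V) : Prop :=
  (∀ α ∈ S, s α ∈ S) ∧ (∀ α ∈ S, s (s α) = α) ∧
  (∀ α ∈ S, s α ≠ α → pairR α (s α) = 0) ∧
  (∀ α ∈ S, ∀ β ∈ S, pairR (α - s α) β + pairR (α - s α) (s β) = 0)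

lemma pairR_sub_left (x y v : V) : pairR (x - y) v = pairR x v - pairR y v := by
  simp only [pairR, inner_sub_left]
  ring

lemma pairR_eq_zero_iff (x v : V) : pairR x v = 0 ↔ ⟪x, v⟫ = 0 := by
  simp only [pairR, div_eq_zero_iff, mul_eq_zero, two_ne_zero, false_or, inner_self_eq_zero]
  exact or_iff_left_of_imp fun hv => by simp [hv]

lemma pairR_eq_zero_comm (x y : V) : pairR x y = 0 ↔ pairR y x = 0 := by
  rw [pairR_eq_zero_iff, pairR_eq_zero_iff, real_inner_comm]

lemma pairR_nonpos {x v : V} (h : ⟪x, v⟫ ≤ 0) : pairR x v ≤ 0 :=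
  div_nonpos_of_nonpos_of_nonneg (by linarith) real_inner_self_nonneg

lemma LinearIndepOn.exists_pos_sum_mul_pairR {T : Finset V}
    (hT : LinearIndepOn ℝ id (T : Set V)) (hTne : T.Nonempty) {w : V → ℝ}
    (hw : ∀ δ ∈ T, 0 < w δ) : ∃ γ ∈ T, 0 < ∑ δ ∈ T, w δ * pairR γ δ := by
  by_contra! hle
  set c : V → ℝ := fun δ => 2 * w δ / ⟪δ, δ⟫
  have hc : ∀ δ ∈ T, 0 < c δ := fun δ hδ =>
    div_pos (mul_pos two_pos (hw δ hδ)) (real_inner_self_pos.mpr (hT.ne_zero hδ))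
  set y := ∑ δ ∈ T, c δ • δ
  have hpair : ∀ γ, ⟪γ, y⟫ = ∑ δ ∈ T, w δ * pairR γ δ := fun γ => by
    simp only [y, inner_sum, real_inner_smul_right, c, pairR]
    exact Finset.sum_congr rfl fun δ _ => by ring
  have hy : ⟪y, y⟫ ≤ 0 :=
    calc ⟪y, y⟫ = ∑ γ ∈ T, c γ * ⟪γ, y⟫ := by simp only [y, sum_inner, real_inner_smul_left]
      _ ≤ 0 := Finset.sum_nonpos fun γ hγ =>
          mul_nonpos_of_nonneg_of_nonpos (hc γ hγ).le (hpair γ ▸ hle γ hγ)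
  obtain ⟨δ, hδ⟩ := hTne
  exact (hc δ hδ).ne' (linearIndepOn_finset_iff.mp hT c (real_inner_self_nonpos.mp hy) δ hδ)

section RootSystem

variable {Φ S : Set V} {s : V → V} {α β : V}

lemma IsBase.ne_zero (hΦ : IsRootSystem Φ) (hS : IsBase Φ S) (hα : α ∈ S) : α ≠ 0 :=
  fun h => hΦ.2.1 (h ▸ hS.1 hα)

lemma IsBase.linearIndepOn (hS : IsBase Φ S) : LinearIndepOn ℝ id S :=
  hS.2.1

lemma IsBase.inner_nonpos (hΦ : IsRootSystem Φ) (hS : IsBase Φ S) (hα : α ∈ S) (hβ : β ∈ S)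
    (hne : α ≠ β) : ⟪α, β⟫ ≤ 0 := by
  have ⟨_, _, hrefl, hint, _⟩ := hΦ
  have ⟨hsub, _, _, hrep⟩ := hS
  by_contra! hpos
  obtain ⟨n, hn⟩ := hint α (hsub hα) β (hsub hβ)
  have hn_pos : 0 < n := by
    have : 0 < pairR β α :=
      div_pos (by rw [real_inner_comm]; linarith) (real_inner_self_pos.mpr (hS.ne_zero hΦ hα))
    exact_mod_cast hn ▸ this
  obtain ⟨c, hcS, hc, hsign⟩ := hrep _ (hrefl α (hsub hα) β (hsub hβ))
  -- `β - n α` has two expansions in the base `S`; comparing the coefficients of `α` and `β`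
  -- contradicts the sign condition.
  have hcoeff : c.mapRange ((↑) : ℤ → ℝ) Int.cast_zero
      = Finsupp.single β 1 - Finsupp.single α (n : ℝ) := by
    refine (linearIndepOn_iffₛ (v := id)).mp hS.linearIndepOn _ ?_ _ ?_ ?_
    · exact (Finsupp.mem_supported _ _).mpr
        ((Finset.coe_subset.mpr Finsupp.support_mapRange).trans hcS)
    · exact sub_mem (Finsupp.single_mem_supported ℝ _ hβ) (Finsupp.single_mem_supported ℝ _ hα)
    · rw [Finsupp.linearCombination_apply,
        Finsupp.sum_mapRange_index (h := fun v (r : ℝ) => r • id v) fun _ => zero_smul ℝ _]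
      simp [← hc, reflV, hn]
  have hcβ := DFunLike.congr_fun hcoeff β
  have hcα := DFunLike.congr_fun hcoeff α
  simp only [Finsupp.mapRange_apply, Finsupp.coe_sub, Pi.sub_apply, Finsupp.single_eq_same,
    Finsupp.single_eq_of_ne hne, Finsupp.single_eq_of_ne hne.symm, zero_sub] at hcβ hcα
  have hcβ' : c β = 1 := by exact_mod_cast hcβ
  have hcα' : c α = -n := by exact_mod_cast hcα
  rcases hsign with h | h
  · linarith [h α]
  · linarith [h β]

lemma IsBase.exists_pairR_eq_int_nonpos (hΦ : IsRootSystem Φ) (hS : IsBase Φ S) (hα : α ∈ S)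
    (hβ : β ∈ S) (hne : α ≠ β) :
    ∃ m n : ℤ, pairR α β = m ∧ pairR β α = n ∧ m ≤ 0 ∧ n ≤ 0 ∧ (m = 0 ↔ n = 0) := by
  have ⟨_, _, _, hint, _⟩ := hΦ
  obtain ⟨m, hm⟩ := hint β (hS.1 hβ) α (hS.1 hα)
  obtain ⟨n, hn⟩ := hint α (hS.1 hα) β (hS.1 hβ)
  refine ⟨m, n, hm, hn, ?_, ?_, ?_⟩
  · exact_mod_cast hm ▸ pairR_nonpos (hS.inner_nonpos hΦ hα hβ hne)
  · exact_mod_cast hn ▸ pairR_nonpos (hS.inner_nonpos hΦ hβ hα hne.symm)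
  · exact_mod_cast hm ▸ hn ▸ pairR_eq_zero_comm α β

lemma IsFolding.injOn (hs : IsFolding S s) : Set.InjOn s S :=
  fun x hx y hy h => by rw [← hs.2.1 x hx, h, hs.2.1 y hy]

lemma IsFolding.pairR_apply_left_of_apply_eq (hs : IsFolding S s) (hα : α ∈ S) (hβ : β ∈ S)
    (hsβ : s β = β) : pairR (s α) β = pairR α β := by
  have := hs.2.2.2 α hα β hβ
  rw [hsβ, pairR_sub_left] at this
  linarith

lemma IsFolding.pairR_eq_of_apply_ne_of_apply_eq (hΦ : IsRootSystem Φ) (hS : IsBase Φ S)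
    (hs : IsFolding S s) (hα : α ∈ S) (hβ : β ∈ S) (hne : α ≠ β) (hsα : s α ≠ α)
    (hsβ : s β = β) (hdiff : pairR β α ≠ pairR β (s α)) :
    pairR α β = -1 ∧ pairR (s α) β = -1 ∧
      (pairR β α = -1 ∧ pairR β (s α) = -2 ∨ pairR β α = -2 ∧ pairR β (s α) = -1) := by
  have hsαS := hs.1 α hα
  have hβsα : β ≠ s α := fun h => hne (hs.injOn hα hβ (hsβ.trans h).symm)
  obtain ⟨A, E, hA, hE, hA0, hE0, hAE⟩ := hS.exists_pairR_eq_int_nonpos hΦ hα hβ hne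
  obtain ⟨B, G, hB, hG, -, hG0, hBG⟩ := hS.exists_pairR_eq_int_nonpos hΦ hsαS hβ hβsα.symm
  have hBA : B = A := by exact_mod_cast hB ▸ hA ▸ hs.pairR_apply_left_of_apply_eq hα hβ hsβ
  have hEG : E ≠ G := fun h => hdiff (by rw [hE, hG, h])
  have hαsα : pairR α (s α) = 0 := hs.2.2.1 α hα hsα
  have hneg : A ≤ -1 ∧ E ≤ -1 ∧ G ≤ -1 := by omega
  have hbound : A * (E + G) < 4 := by
    classical
    by_contra! h
    have hAEG : (4 : ℝ) ≤ A * (E + G) := by exact_mod_cast h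
    have hEG : (E + G : ℝ) < 0 := by exact_mod_cast (by omega : E + G < 0)
    have hli : LinearIndepOn ℝ id (({α, β, s α} : Finset V) : Set V) :=
      hS.linearIndepOn.mono (by simp [Set.insert_subset_iff, hα, hβ, hsαS])
    obtain ⟨γ, hγ, hpos⟩ := hli.exists_pos_sum_mul_pairR (by simp)
      (w := fun δ => if δ = β then -(E + G) / 2 else 1) (fun δ _ => by split_ifs <;> linarith)
    simp only [Finset.mem_insert, Finset.mem_singleton, Finset.sum_insert, Finset.sum_singleton,
      hne, hsα.symm, hβsα, hβsα.symm, or_self, not_false_eq_true, ↓reduceIte, ite_mul,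
      one_mul] at hγ hpos
    rcases hγ with rfl | rfl | rfl
    · rw [pairR_self (hS.ne_zero hΦ hα), hA, hαsα] at hpos
      nlinarith
    · rw [pairR_self (hS.ne_zero hΦ hβ), hE, hG] at hpos
      linarith
    · rw [pairR_self (hS.ne_zero hΦ hsαS), hB, hBA, (pairR_eq_zero_comm _ _).mp hαsα] at hpos
      nlinarith
  have hA1 : A = -1 := by nlinarith
  have hEG3 : E + G = -3 := by rw [hA1] at hbound; omega
  refine ⟨by rw [hA, hA1]; norm_num, by rw [hB, hBA, hA1]; norm_num, ?_⟩
  rw [hE, hG]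
  rcases (by omega : E = -1 ∧ G = -2 ∨ E = -2 ∧ G = -1) with ⟨rfl, rfl⟩ | ⟨rfl, rfl⟩ <;> norm_num

def IsFoldedB3 (s : V → V) (T : Set V) : Prop :=
  T.ncard = 3 ∧
    ∃ γ₁ γ₂ γ₃ : V, T = {γ₁, γ₂, γ₃} ∧ γ₁ ≠ γ₂ ∧ γ₁ ≠ γ₃ ∧ γ₂ ≠ γ₃ ∧
      s γ₁ = γ₃ ∧ s γ₃ = γ₁ ∧ s γ₂ = γ₂ ∧
      pairR γ₁ γ₂ = -1 ∧ pairR γ₃ γ₂ = -1 ∧ pairR γ₂ γ₁ = -1 ∧ pairR γ₂ γ₃ = -2 ∧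
      pairR γ₁ γ₃ = 0 ∧ pairR γ₃ γ₁ = 0

lemma IsFolding.isFoldedB3_of_apply_ne_of_apply_eq (hΦ : IsRootSystem Φ) (hS : IsBase Φ S)
    (hs : IsFolding S s) (hα : α ∈ S) (hβ : β ∈ S) (hne : α ≠ β)
    (hdiff : pairR α β ≠ pairR (s α) (s β) ∨ pairR β α ≠ pairR (s β) (s α))
    (hsα : s α ≠ α) (hsβ : s β = β) : IsFoldedB3 s {α, β, s α, s β} := by
  have hβsα : β ≠ s α := fun h => hne (hs.injOn hα hβ (hsβ.trans h).symm)
  rw [hsβ] at hdiff ⊢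
  have hdiff' : pairR β α ≠ pairR β (s α) :=
    hdiff.resolve_left (not_not.mpr (hs.pairR_apply_left_of_apply_eq hα hβ hsβ).symm)
  obtain ⟨hαβ, hsαβ, hβα⟩ := hs.pairR_eq_of_apply_ne_of_apply_eq hΦ hS hα hβ hne hsα hsβ hdiff'
  have hαsα : pairR α (s α) = 0 := hs.2.2.1 α hα hsα
  have hsαα : pairR (s α) α = 0 := (pairR_eq_zero_comm _ _).mp hαsα
  have hset : ({α, β, s α, β} : Set V) = {α, β, s α} := by
    rw [Set.pair_comm, Set.insert_idem]
  refine ⟨hset ▸ Set.ncard_eq_three.mpr ⟨α, β, s α, hne, hsα.symm, hβsα, rfl⟩, ?_⟩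
  rcases hβα with ⟨h₁, h₂⟩ | ⟨h₁, h₂⟩
  · exact ⟨α, β, s α, hset, hne, hsα.symm, hβsα, rfl, hs.2.1 α hα, hsβ, hαβ, hsαβ, h₁, h₂,
      hαsα, hsαα⟩
  · refine ⟨s α, β, α, ?_, hβsα.symm, hsα, hne.symm, hs.2.1 α hα, rfl, hsβ, hsαβ, hαβ, h₂, h₁,
      hsαα, hαsα⟩
    rw [hset, Set.insert_comm, Set.pair_comm, Set.insert_comm]

lemma IsFolding.apply_ne_of_pairR_ne (hs : IsFolding S s) (hα : α ∈ S) (hne : α ≠ β)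
    (hdiff : pairR α β ≠ pairR (s α) (s β) ∨ pairR β α ≠ pairR (s β) (s α)) : s α ≠ β := by
  intro hsαβ
  have hsβα : s β = α := by rw [← hsαβ, hs.2.1 α hα]
  have hαβ : pairR α β = 0 := hsαβ ▸ hs.2.2.1 α hα (hsαβ ▸ hne.symm)
  rw [hsαβ, hsβα, hαβ, (pairR_eq_zero_comm _ _).mp hαβ] at hdiff
  simp at hdiff

lemma IsFolding.pairR_add_pairR_apply_le_neg_two (hΦ : IsRootSystem Φ) (hS : IsBase Φ S)
    (hs : IsFolding S s) (hα : α ∈ S) (hβ : β ∈ S) (hne : α ≠ β)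
    (hdiff : pairR α β ≠ pairR (s α) (s β) ∨ pairR β α ≠ pairR (s β) (s α)) :
    pairR α β + pairR α (s β) ≤ -2 ∧ pairR β α + pairR β (s α) ≤ -2 ∧
      pairR (s α) β + pairR (s α) (s β) ≤ -2 ∧ pairR (s β) α + pairR (s β) (s α) ≤ -2 := by
  have hsαS := hs.1 α hα
  have hsβS := hs.1 β hβ
  have hsαβ : s α ≠ β := hs.apply_ne_of_pairR_ne hα hne hdiff
  have hsβα : s β ≠ α := fun h => hsαβ (by rw [← h, hs.2.1 β hβ])
  obtain ⟨A, E, hA, hE, hA0, hE0, hAE⟩ := hS.exists_pairR_eq_int_nonpos hΦ hα hβ hne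
  obtain ⟨B, G, hB, hG, hB0, hG0, hBG⟩ := hS.exists_pairR_eq_int_nonpos hΦ hsαS hβ hsαβ
  obtain ⟨C, F, hC, hF, hC0, hF0, hCF⟩ := hS.exists_pairR_eq_int_nonpos hΦ hα hsβS hsβα.symm
  obtain ⟨D, H, hD, hH, hD0, hH0, hDH⟩ :=
    hS.exists_pairR_eq_int_nonpos hΦ hsαS hsβS fun h => hne (hs.injOn hα hβ h)
  have hABCD : A + C = B + D := by
    have := hs.2.2.2 α hα β hβ
    rw [pairR_sub_left, pairR_sub_left, hA, hB, hC, hD] at this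
    exact_mod_cast (by linarith : (A + C : ℝ) = B + D)
  have hEFGH : E + G = F + H := by
    have := hs.2.2.2 β hβ α hα
    rw [pairR_sub_left, pairR_sub_left, hE, hF, hG, hH] at this
    exact_mod_cast (by linarith : (E + G : ℝ) = F + H)
  have hAD : A ≠ D ∨ E ≠ H := by
    rw [hA, hD, hE, hH] at hdiff
    exact_mod_cast hdiff
  rw [hA, hC, hE, hG, hB, hD, hF, hH]
  exact_mod_cast (by omega : A + C ≤ -2 ∧ E + G ≤ -2 ∧ B + D ≤ -2 ∧ F + H ≤ -2)

lemma IsFolding.apply_eq_self_or_apply_eq_self (hΦ : IsRootSystem Φ) (hS : IsBase Φ S)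
    (hs : IsFolding S s) (hα : α ∈ S) (hβ : β ∈ S) (hne : α ≠ β)
    (hdiff : pairR α β ≠ pairR (s α) (s β) ∨ pairR β α ≠ pairR (s β) (s α)) :
    s α = α ∨ s β = β := by
  classical
  by_contra! ⟨hsα, hsβ⟩
  have hsαS := hs.1 α hα
  have hsβS := hs.1 β hβ
  have hsαβ : s α ≠ β := hs.apply_ne_of_pairR_ne hα hne hdiff
  have hsβα : s β ≠ α := fun h => hsαβ (by rw [← h, hs.2.1 β hβ])
  have hsαsβ : s α ≠ s β := fun h => hne (hs.injOn hα hβ h)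
  have hαsα : pairR α (s α) = 0 := hs.2.2.1 α hα hsα
  have hβsβ : pairR β (s β) = 0 := hs.2.2.1 β hβ hsβ
  obtain ⟨hrα, hrβ, hrsα, hrsβ⟩ := hs.pairR_add_pairR_apply_le_neg_two hΦ hS hα hβ hne hdiff
  have hli : LinearIndepOn ℝ id (({α, β, s α, s β} : Finset V) : Set V) :=
    hS.linearIndepOn.mono (by simp [Set.insert_subset_iff, hα, hβ, hsαS, hsβS])
  obtain ⟨γ, hγ, hpos⟩ := hli.exists_pos_sum_mul_pairR (by simp) (w := 1) (by simp)
  simp only [Finset.mem_insert, Finset.mem_singleton, Finset.sum_insert, Finset.sum_singleton,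
    Pi.one_apply, one_mul, hne, hsα.symm, hsβ.symm, hsαβ.symm, hsβα.symm, hsαsβ, or_self,
    not_false_eq_true] at hγ hpos
  rcases hγ with rfl | rfl | rfl | rfl
  · rw [pairR_self (hS.ne_zero hΦ hα), hαsα] at hpos
    linarith
  · rw [pairR_self (hS.ne_zero hΦ hβ), hβsβ] at hpos
    linarith
  · rw [pairR_self (hS.ne_zero hΦ hsαS), (pairR_eq_zero_comm _ _).mp hαsα] at hpos
    linarith
  · rw [pairR_self (hS.ne_zero hΦ hsβS), (pairR_eq_zero_comm _ _).mp hβsβ] at hpos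
    linarith

end RootSystem

theorem stmt5_general {V : Type*} [NormedAddCommGroup V] [InnerProductSpace ℝ V]
    (Φ S : Set V)
    (hΦ : IsRootSystem Φ) (hS : IsBase Φ S)
    (s : V → V) (hfold : IsFolding S s)
    (α β : V) (hα : α ∈ S) (hβ : β ∈ S) (hne : α ≠ β)
    (hdiff : pairR α β ≠ pairR (s α) (s β) ∨ pairR β α ≠ pairR (s β) (s α)) :
    ({α, β, s α, s β} : Set V).ncard = 3 ∧
    ∃ γ₁ γ₂ γ₃ : V,
      ({α, β, s α, s β} : Set V) = {γ₁, γ₂, γ₃} ∧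
      γ₁ ≠ γ₂ ∧ γ₁ ≠ γ₃ ∧ γ₂ ≠ γ₃ ∧
      s γ₁ = γ₃ ∧ s γ₃ = γ₁ ∧ s γ₂ = γ₂ ∧
      pairR γ₁ γ₂ = -1 ∧ pairR γ₃ γ₂ = -1 ∧ pairR γ₂ γ₁ = -1 ∧ pairR γ₂ γ₃ = -2 ∧
      pairR γ₁ γ₃ = 0 ∧ pairR γ₃ γ₁ = 0 := by
  by_cases hsα : s α = α <;> by_cases hsβ : s β = β
  · rw [hsα, hsβ] at hdiff
    simp at hdiff
  · rw [Set.insert_comm, Set.pair_comm]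
    exact hfold.isFoldedB3_of_apply_ne_of_apply_eq hΦ hS hβ hα hne.symm hdiff.symm hsβ hsα
  · exact hfold.isFoldedB3_of_apply_ne_of_apply_eq hΦ hS hα hβ hne hdiff hsα hsβ
  · exact ((hfold.apply_eq_self_or_apply_eq_self hΦ hS hα hβ hne hdiff).elim hsα hsβ).elim

/-- if `s` is a folding and `α ≠ β` in `S` have
`⟨α|β∨⟩ ≠ ⟨sα|sβ∨⟩` or `⟨β|α∨⟩ ≠ ⟨sβ|sα∨⟩`, then `S₀ = {α, β, sα, sβ}` has exactly
three elements `γ₁, γ₂, γ₃` with `s` swapping `γ₁, γ₃` and fixing `γ₂`, whose Cartan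
numbers are those of type `B₃` (after possibly exchanging `γ₁` and `γ₃`). -/
theorem stmt5 {V : Type*} [NormedAddCommGroup V] [InnerProductSpace ℝ V]
    [FiniteDimensional ℝ V] (Φ S : Set V)
    (hΦ : IsRootSystem Φ) (hS : IsBase Φ S)
    (s : V → V) (hfold : IsFolding S s)
    (α β : V) (hα : α ∈ S) (hβ : β ∈ S) (hne : α ≠ β)
    (hdiff : pairR α β ≠ pairR (s α) (s β) ∨ pairR β α ≠ pairR (s β) (s α)) :
    ({α, β, s α, s β} : Set V).ncard = 3 ∧
    ∃ γ₁ γ₂ γ₃ : V,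
      ({α, β, s α, s β} : Set V) = {γ₁, γ₂, γ₃} ∧
      γ₁ ≠ γ₂ ∧ γ₁ ≠ γ₃ ∧ γ₂ ≠ γ₃ ∧
      s γ₁ = γ₃ ∧ s γ₃ = γ₁ ∧ s γ₂ = γ₂ ∧
      pairR γ₁ γ₂ = -1 ∧ pairR γ₃ γ₂ = -1 ∧ pairR γ₂ γ₁ = -1 ∧ pairR γ₂ γ₃ = -2 ∧
      pairR γ₁ γ₃ = 0 ∧ pairR γ₃ γ₁ = 0 :=
  stmt5_general Φ S hΦ hS s hfold α β hα hβ hne hdiff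
end
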